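/- arXiv:2009.04259 — 3 statements merged into one kernel-verified Lean document; each statement's English description precedes it below -/
import Mathlib

section
/- For all natural numbers k, n, m with ⌈log n⌉^(k+1) ≤ n and m < ⌈log n⌉^(k+1), there is no predicate A : (Fin n → Bool) → Prop having rejection certificates of size m such that for every binary string w of length n, A(w) holds if and only if w ∈ NOCONSEQ_{k+1}. (Combinatorial core of the lower bound in Theorem 3: NOCONSEQ_{k+1} is not decidable by a co-nondeterministic random-access machine whose rejecting computations read at most m input bits.) -/
/-- `w` has a run of zeros of length `L` at position `i`. -/
def hasRunAt (n : ℕ) (w : Fin n → Bool) (i L : ℕ) : Prop :=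
  i + L ≤ n ∧ ∀ j : Fin n, i ≤ (j : ℕ) → (j : ℕ) < i + L → w j = false

/-- `w` has a run of zeros of length `L` (at some position). -/
def hasRun (n : ℕ) (w : Fin n → Bool) (L : ℕ) : Prop :=
  ∃ i : ℕ, hasRunAt n w i L

/-- `w ∈ NOCONSEQ_k`: `w` has no run of zeros of length `⌈log n⌉^k`. -/
def NoConseqMem (k n : ℕ) (w : Fin n → Bool) : Prop :=
  ¬ hasRun n w ((Nat.clog 2 n) ^ k)

/-- `A` has rejection certificates of size `m`. -/
def HasRejCert (n m : ℕ) (A : (Fin n → Bool) → Prop) : Prop :=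
  ∀ w : Fin n → Bool, ¬ A w → ∃ S : Finset (Fin n), S.card ≤ m ∧
    ∀ v : Fin n → Bool, (∀ i ∈ S, v i = w i) → ¬ A v

/-!
A rejection certificate `S` for the all-zero string also certifies the rejection of the string
that is zero exactly on `S`. Rejected strings of `NOCONSEQ_{k+1}` contain a run of zeros of length
`⌈log n⌉^(k+1)`, so `S` must contain that whole run and cannot have fewer than `⌈log n⌉^(k+1)`
elements.
-/

lemma hasRun_const_false {n L : ℕ} (h : L ≤ n) : hasRun n (fun _ => false) L :=
  ⟨0, by simpa using h, fun _ _ _ => rfl⟩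

lemma card_le_of_hasRun_zeroOn {n L : ℕ} {S : Finset (Fin n)}
    (h : hasRun n (fun i => decide (i ∉ S)) L) : L ≤ S.card := by
  obtain ⟨i, hiL, hzero⟩ := h
  have hsub : Finset.Ico i (i + L) ⊆ S.image Fin.val := by
    intro x hx
    obtain ⟨hix, hxL⟩ := Finset.mem_Ico.mp hx
    have hxn : x < n := by omega
    have hx' := hzero ⟨x, hxn⟩ hix hxL
    exact Finset.mem_image.mpr ⟨⟨x, hxn⟩, by simpa using hx', rfl⟩
  calc L = (Finset.Ico i (i + L)).card := by simp
    _ ≤ (S.image Fin.val).card := Finset.card_le_card hsub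
    _ ≤ S.card := Finset.card_image_le

lemma HasRejCert.exists_rejects_zeroOn {n m : ℕ} {A : (Fin n → Bool) → Prop}
    (hA : HasRejCert n m A) (hzero : ¬ A (fun _ => false)) :
    ∃ S : Finset (Fin n), S.card ≤ m ∧ ¬ A (fun i => decide (i ∉ S)) := by
  obtain ⟨S, hcard, hrej⟩ := hA _ hzero
  exact ⟨S, hcard, hrej _ fun i hi => by simp [hi]⟩

theorem noconseq_lower_bound (k n m : ℕ)
    (hkn : (Nat.clog 2 n) ^ (k + 1) ≤ n)
    (hm : m < (Nat.clog 2 n) ^ (k + 1)) :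
    ¬ ∃ A : (Fin n → Bool) → Prop, HasRejCert n m A ∧
        ∀ w : Fin n → Bool, (A w ↔ NoConseqMem (k + 1) n w) := by
  rintro ⟨A, hA, hspec⟩
  have hzero : ¬ A (fun _ => false) := by
    rw [hspec, NoConseqMem, not_not]
    exact hasRun_const_false hkn
  obtain ⟨S, hcard, hrej⟩ := hA.exists_rejects_zeroOn hzero
  rw [hspec, NoConseqMem, not_not] at hrej
  exact (card_le_of_hasRun_zeroOn hrej).not_gt (hcard.trans_lt hm)
end

section
/- For all natural numbers k and c, there exists N such that for every n ≥ N: (a) membership in CONSEQ_{k+1} on binary strings of length n has acceptance certificates of size ⌈log n⌉^(k+1) (i.e., the membership predicate itself has such certificates), and (b) there is no predicate A : (Fin n → Bool) → Prop having acceptance certificates of size c · ⌈log n⌉^k with A(w) ↔ w ∈ CONSEQ_{k+1} for all w. (Query-complexity packaging of Theorem 2: NTIME[log^k n] ⊊ NTIME[log^(k+1) n], witnessed by CONSEQ_{k+1}.) -/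
/-!
A run of `L` zeros is certified by its own `L` positions. Conversely, if `A` has certificates
and is equivalent to "has a run of `L` zeros" with `L ≤ n`, let `S` certify `A` at the all-zero
string. Setting every bit outside `S` to one keeps the string accepted, and the zeros of that
string are exactly `S`, so `S` contains a run of length `L`. With `L = ⌈log n⌉^(k+1) ≤ n` this forces
`c ⌈log n⌉^k ≥ ⌈log n⌉^(k+1)`, which fails as soon as `⌈log n⌉ > c`.
-/

open Finset Filter

/-- `w ∈ CONSEQ_k`: `w` has a run of zeros of length `⌈log n⌉^k`. -/
def ConseqMem (k n : ℕ) (w : Fin n → Bool) : Prop :=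
  hasRun n w ((Nat.clog 2 n) ^ k)

/-- `A` has acceptance certificates of size `m`. -/
def HasAccCert (n m : ℕ) (A : (Fin n → Bool) → Prop) : Prop :=
  ∀ w : Fin n → Bool, A w → ∃ S : Finset (Fin n), S.card ≤ m ∧
    ∀ v : Fin n → Bool, (∀ i ∈ S, v i = w i) → A v

def runWindow (n i L : ℕ) : Finset (Fin n) :=
  univ.filter fun j => i ≤ (j : ℕ) ∧ (j : ℕ) < i + L

lemma mem_runWindow {n i L : ℕ} {j : Fin n} :
    j ∈ runWindow n i L ↔ i ≤ (j : ℕ) ∧ (j : ℕ) < i + L := by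
  simp [runWindow]

lemma card_runWindow {n i L : ℕ} (h : i + L ≤ n) : (runWindow n i L).card = L := by
  have hmap : (runWindow n i L).map Fin.valEmbedding = Ico i (i + L) := by
    ext x
    simp only [Finset.mem_map, mem_runWindow, Finset.mem_Ico, Fin.valEmbedding_apply]
    exact ⟨fun ⟨j, hj, hjx⟩ => hjx ▸ hj, fun hx => ⟨⟨x, by omega⟩, hx, rfl⟩⟩
  rw [← card_map, hmap, Nat.card_Ico, Nat.add_sub_cancel_left]

theorem hasAccCert_hasRun (n L : ℕ) : HasAccCert n L fun w => hasRun n w L := by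
  rintro w ⟨i, hiL, hrun⟩
  refine ⟨runWindow n i L, (card_runWindow hiL).le, fun v hv => ⟨i, hiL, fun j hj₁ hj₂ => ?_⟩⟩
  rw [hv j (mem_runWindow.2 ⟨hj₁, hj₂⟩)]
  exact hrun j hj₁ hj₂

lemma hasRunAt.le_card_zeros {n i L : ℕ} {w : Fin n → Bool} (h : hasRunAt n w i L) :
    L ≤ (univ.filter fun j => w j = false).card := by
  rw [← card_runWindow h.1]
  refine card_le_card fun j hj => ?_
  rw [mem_runWindow] at hj
  simpa using h.2 j hj.1 hj.2

theorem HasAccCert.le_of_iff_hasRun {n m L : ℕ} {A : (Fin n → Bool) → Prop}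
    (hL : L ≤ n) (hA : HasAccCert n m A) (hiff : ∀ w, A w ↔ hasRun n w L) : L ≤ m := by
  obtain ⟨S, hSm, hS⟩ := hA _ ((hiff _).2 ⟨0, by simpa using hL, fun _ _ _ => rfl⟩)
  obtain ⟨i, hi⟩ := (hiff _).1 (hS (fun j => decide (j ∉ S)) fun j hj => by simp [hj])
  have hzeros : (univ.filter fun j => decide (j ∉ S) = false) = S := by ext; simp
  have := hi.le_card_zeros
  rw [hzeros] at this
  omega

lemma tendsto_clog_two_atTop : Tendsto (Nat.clog 2) atTop atTop :=
  tendsto_atTop_atTop_of_monotone (Nat.clog_monotone 2) fun t =>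
    ⟨2 ^ t, (Nat.clog_pow 2 t one_lt_two).ge⟩

lemma eventually_two_mul_pow_le_two_pow (m : ℕ) : ∀ᶠ t : ℕ in atTop, 2 * t ^ m ≤ 2 ^ t := by
  filter_upwards [(tendsto_pow_const_div_const_pow_of_one_lt m one_lt_two).eventually_lt_const
    (by norm_num : (0 : ℝ) < 1 / 2)] with t ht
  rw [div_lt_iff₀ (by positivity)] at ht
  exact_mod_cast (by linarith : (2 : ℝ) * t ^ m ≤ 2 ^ t)

lemma eventually_clog_pow_lt (m : ℕ) : ∀ᶠ n : ℕ in atTop, Nat.clog 2 n ^ m < n := by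
  filter_upwards [tendsto_clog_two_atTop.eventually (eventually_two_mul_pow_le_two_pow m),
    tendsto_clog_two_atTop.eventually_gt_atTop 0, eventually_gt_atTop 1] with n hpow hpos hn
  have hpred := Nat.pow_pred_clog_lt_self one_lt_two hn
  have hsucc : 2 ^ Nat.clog 2 n = 2 * 2 ^ (Nat.clog 2 n).pred := by
    rw [← pow_succ', Nat.pred_eq_sub_one, Nat.sub_add_cancel hpos]
  omega

theorem conseq_hierarchy (k c : ℕ) :
    ∃ N : ℕ, ∀ n : ℕ, n ≥ N →
      HasAccCert n ((Nat.clog 2 n) ^ (k + 1)) (fun w => ConseqMem (k + 1) n w) ∧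
      ¬ ∃ A : (Fin n → Bool) → Prop,
          HasAccCert n (c * (Nat.clog 2 n) ^ k) A ∧
          ∀ w : Fin n → Bool, (A w ↔ ConseqMem (k + 1) n w) := by
  obtain ⟨N, hN⟩ := eventually_atTop.1 <|
    (eventually_clog_pow_lt (k + 1)).and (tendsto_clog_two_atTop.eventually_gt_atTop c)
  refine ⟨N, fun n hn => ⟨hasAccCert_hasRun n _, ?_⟩⟩
  rintro ⟨A, hA, hiff⟩
  obtain ⟨hLn, hct⟩ := hN n hn
  have hLm := hA.le_of_iff_hasRun hLn.le hiff
  have hmL : c * Nat.clog 2 n ^ k < Nat.clog 2 n ^ (k + 1) := by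
    rw [pow_succ']
    exact Nat.mul_lt_mul_of_pos_right hct (pow_pos (Nat.zero_lt_of_lt hct) k)
  omega
end

section
/- For all natural numbers k and c, there exists N such that for every n ≥ N, there is no predicate A : (Fin n → Bool) → Prop having rejection certificates of size c · ⌈log n⌉^k such that A(w) ↔ w ∈ EXACTLYONCE_{k+1} for all binary strings w of length n. (Query-complexity packaging of the lower bound of Theorem 4: EXACTLYONCE_{k+1} ∉ ATIME[log^k n, 2].) -/
/-- `w ∈ EXACTLYONCE_k`: exactly one position carries a run of zeros of length `⌈log n⌉^k`. -/
def ExactlyOnceMem (k n : ℕ) (w : Fin n → Bool) : Prop :=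
  ∃! i : ℕ, hasRunAt n w i ((Nat.clog 2 n) ^ k)

/-!
The all-zero word has many runs of zeros of length `L = ⌈log n⌉^(k+1)`, so it is rejected, and a
rejection certificate for it fixes at most `c ⌈log n⌉^k < L` positions to zero. Since
`L + 2 c ⌈log n⌉^k < n` for large `n`, some window `[a, a + L)` has neither neighbour `a - 1`, `a + L`
in the certificate. Setting that window and the certificate to zero and everything else to one gives a
word that agrees with the certificate but has exactly one run of length `L`: any other run would
either cross a neighbour of the window or lie entirely inside the certificate, which is too small.
-/

open Filter Finset

lemma eventually_mul_pow_lt_two_pow (D j : ℕ) : ∀ᶠ m : ℕ in atTop, D * m ^ j < 2 ^ m := by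
  have h := (tendsto_pow_const_div_const_pow_of_one_lt j one_lt_two).const_mul (D : ℝ)
  rw [mul_zero] at h
  filter_upwards [h.eventually (gt_mem_nhds one_pos)] with m hm
  rw [← mul_div_assoc, div_lt_one (by positivity)] at hm
  exact_mod_cast hm

lemma eventually_mul_clog_pow_lt (D j : ℕ) : ∀ᶠ n : ℕ in atTop, D * Nat.clog 2 n ^ j < n := by
  obtain ⟨M, hM⟩ := eventually_atTop.1 (eventually_mul_pow_lt_two_pow (2 * D) j)
  filter_upwards [eventually_gt_atTop (2 ^ M)] with n hn
  have hMg : M < Nat.clog 2 n := (Nat.lt_clog_iff_pow_lt one_lt_two).2 hn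
  have hhalf : 2 ^ (Nat.clog 2 n - 1) < n :=
    Nat.pow_pred_clog_lt_self one_lt_two (Nat.one_le_two_pow.trans_lt hn)
  have hdouble : 2 ^ Nat.clog 2 n = 2 * 2 ^ (Nat.clog 2 n - 1) := by
    rw [← pow_succ']; congr 1; omega
  have hpoly := hM _ hMg.le
  rw [mul_assoc] at hpoly
  omega

def zerosOn (n : ℕ) (Z : Finset ℕ) : Fin n → Bool := fun j => decide ((j : ℕ) ∉ Z)

lemma hasRunAt_zerosOn_iff {n i L : ℕ} {Z : Finset ℕ} :
    hasRunAt n (zerosOn n Z) i L ↔ i + L ≤ n ∧ Ico i (i + L) ⊆ Z := by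
  simp only [hasRunAt, zerosOn, decide_eq_false_iff_not, not_not]
  refine and_congr_right fun hiL => ⟨fun h x hx => ?_, fun h j hij hjL => h (mem_Ico.2 ⟨hij, hjL⟩)⟩
  rw [mem_Ico] at hx
  exact h ⟨x, by omega⟩ hx.1 hx.2

lemma not_existsUnique_hasRunAt_false {n L : ℕ} (h : L < n) :
    ¬ ∃! i, hasRunAt n (fun _ => false) i L := by
  rintro ⟨i, -, huniq⟩
  have h0 := huniq 0 ⟨by omega, fun _ _ _ => rfl⟩
  have h1 := huniq 1 ⟨by omega, fun _ _ _ => rfl⟩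
  omega

lemma card_le_of_Ico_subset_union {i a L : ℕ} {T : Finset ℕ}
    (h : Ico i (i + L) ⊆ Ico a (a + L) ∪ T) (hapart : i + L ≤ a ∨ a + L ≤ i) : L ≤ T.card := by
  have hsub : Ico i (i + L) ⊆ T := fun x hx => by
    rcases mem_union.1 (h hx) with hxa | hxT
    · rw [mem_Ico] at hx hxa; omega
    · exact hxT
  simpa using card_le_card hsub

lemma eq_of_Ico_subset_union {i a L : ℕ} {T : Finset ℕ} (hT : T.card < L)
    (hleft : ∀ s ∈ T, s + 1 ≠ a) (hright : a + L ∉ T)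
    (h : Ico i (i + L) ⊆ Ico a (a + L) ∪ T) : i = a := by
  by_contra hne
  rcases Nat.lt_or_gt_of_ne hne with hia | hai
  · by_cases hoverlap : a < i + L
    · have hmem := h (mem_Ico.2 ⟨Nat.le_sub_one_of_lt hia, by omega⟩)
      rcases mem_union.1 hmem with hwin | hT'
      · rw [mem_Ico] at hwin; omega
      · exact hleft _ hT' (by omega)
    · exact absurd (card_le_of_Ico_subset_union h (by omega)) (by omega)
  · by_cases hoverlap : i ≤ a + L
    · rcases mem_union.1 (h (mem_Ico.2 ⟨hoverlap, by omega⟩)) with hwin | hT'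
      · rw [mem_Ico] at hwin; omega
      · exact hright hT'
    · exact absurd (card_le_of_Ico_subset_union h (by omega)) (by omega)

lemma exists_flanked_window {n L : ℕ} (T : Finset ℕ) (hn : L + 2 * T.card ≤ n) :
    ∃ a, a + L ≤ n ∧ (∀ s ∈ T, s + 1 ≠ a) ∧ a + L ∉ T := by
  have hcard : (T.image (· + 1) ∪ T.image (· - L)).card < (range (n - L + 1)).card := by
    have := card_union_le (T.image (· + 1)) (T.image (· - L))
    have := card_image_le (s := T) (f := (· + 1))
    have := card_image_le (s := T) (f := (· - L))
    rw [card_range]; omega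
  obtain ⟨a, ha, haF⟩ := exists_mem_notMem_of_card_lt_card hcard
  refine ⟨a, by rw [mem_range] at ha; omega, fun s hs hsa => haF ?_, fun haT => haF ?_⟩
  · exact mem_union_left _ (mem_image.2 ⟨s, hs, hsa⟩)
  · exact mem_union_right _ (mem_image.2 ⟨a + L, haT, Nat.add_sub_cancel a L⟩)

theorem not_hasRejCert_existsUnique_hasRunAt {n m L : ℕ} (hmL : m < L) (hLn : L + 2 * m < n)
    {A : (Fin n → Bool) → Prop} (hA : ∀ w, A w ↔ ∃! i, hasRunAt n w i L) :
    ¬ HasRejCert n m A := by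
  intro hcert
  obtain ⟨S, hSm, hS⟩ :=
    hcert (fun _ => false) fun h => not_existsUnique_hasRunAt_false (by omega) ((hA _).1 h)
  set T := S.map Fin.valEmbedding
  have hT : T.card ≤ m := by rwa [card_map]
  obtain ⟨a, haL, hleft, hright⟩ := exists_flanked_window (n := n) (L := L) T (by omega)
  refine hS (zerosOn n (Ico a (a + L) ∪ T)) (fun j hj => ?_) ((hA _).2 ⟨a, ?_, fun i hi => ?_⟩)
  · exact decide_eq_false (not_not.2 (mem_union_right _ (mem_map_of_mem _ hj)))
  · exact hasRunAt_zerosOn_iff.2 ⟨haL, subset_union_left⟩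
  · exact eq_of_Ico_subset_union (by omega) hleft hright (hasRunAt_zerosOn_iff.1 hi).2

theorem exactlyonce_hierarchy_lower (k c : ℕ) :
    ∃ N : ℕ, ∀ n : ℕ, n ≥ N →
      ¬ ∃ A : (Fin n → Bool) → Prop,
          HasRejCert n (c * (Nat.clog 2 n) ^ k) A ∧
          ∀ w : Fin n → Bool, (A w ↔ ExactlyOnceMem (k + 1) n w) := by
  refine eventually_atTop.1 ?_
  filter_upwards [eventually_mul_clog_pow_lt (2 * c + 1) (k + 1), eventually_gt_atTop (2 ^ c)]
    with n hsize hc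
  set g := Nat.clog 2 n
  have hcg : c < g := (Nat.lt_clog_iff_pow_lt one_lt_two).2 hc
  have hmL : c * g ^ k < g ^ (k + 1) := by
    rw [pow_succ']; exact Nat.mul_lt_mul_of_pos_right hcg (Nat.pow_pos (by omega))
  have hm : c * g ^ k ≤ c * g ^ (k + 1) :=
    Nat.mul_le_mul_left c (Nat.pow_le_pow_right (by omega) k.le_succ)
  rintro ⟨A, hcert, hA⟩
  exact not_hasRejCert_existsUnique_hasRunAt hmL (by linarith) hA hcert
end
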